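/- Let R be a positive semidefinite matrix and C a closed set of positive semidefinite matrices containing states (here, the invariant matrices under a finite unitary group action). Then min over S in C of B(R,S)² equals Tr(R) − max over unit-trace σ in C of F(R,σ). Moreover, if τ attains the fidelity maximum, then T = F(R,τ)·τ attains the Bures minimum. -/

import Mathlib

/-!
Every nonzero positive semidefinite `S` in a cone is `(Tr S) σ` for a state `σ` of the cone, and
`F(R, kσ) = k F(R, σ)`, so `B(R, kσ)² = Tr R + k - 2 √(k F(R, σ)) ≥ Tr R - F(R, σ)` by AM-GM,
with equality at `k = F(R, σ)`. Hence `Tr R - sup F` is the greatest lower bound of the Bures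
values over the cone; the supremum is finite since `F(R, σ) ≤ dim · Tr R · Tr σ`.
-/

open Matrix
open scoped ComplexOrder Classical

variable {n : Type*} [Fintype n] [DecidableEq n]

/-- The positive semidefinite square root of a matrix (junk value `0` if not PSD). -/
noncomputable def msqrt (A : Matrix n n ℂ) : Matrix n n ℂ :=
  if h : A.PosSemidef then
    (h.1.eigenvectorUnitary : Matrix n n ℂ) * diagonal ((↑) ∘ Real.sqrt ∘ h.1.eigenvalues) *
      (star h.1.eigenvectorUnitary : Matrix n n ℂ) else 0

/-- The trace norm `‖M‖₁ = Tr √(Mᴴ M)`. -/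
noncomputable def traceNorm (M : Matrix n n ℂ) : ℝ :=
  ((msqrt (Mᴴ * M)).trace).re

/-- The fidelity `F(R,S) = (Tr √(√R S √R))²` of positive semidefinite matrices. -/
noncomputable def fidelity (R S : Matrix n n ℂ) : ℝ :=
  (((msqrt (msqrt R * S * msqrt R)).trace).re) ^ 2

/-- The squared Bures distance `B(R,S)² = Tr R + Tr S - 2 √F(R,S)`. -/
noncomputable def bures2 (R S : Matrix n n ℂ) : ℝ :=
  (R.trace).re + (S.trace).re - 2 * Real.sqrt (fidelity R S)

/-- The twirling map `𝓔(X) = (1/|G|) ∑ g, U g * X * (U g)ᴴ`. -/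
noncomputable def twirl {G : Type*} [Fintype G] (U : G → Matrix n n ℂ)
    (X : Matrix n n ℂ) : Matrix n n ℂ :=
  (Fintype.card G : ℂ)⁻¹ • ∑ g, U g * X * (U g)ᴴ

/-- The maximum eigenvalue of a Hermitian matrix. -/
noncomputable def lamMax {A : Matrix n n ℂ} (hA : A.IsHermitian) : ℝ :=
  ⨆ i, hA.eigenvalues i

/-- The minimum eigenvalue of a Hermitian matrix. -/
noncomputable def lamMin {A : Matrix n n ℂ} (hA : A.IsHermitian) : ℝ :=
  ⨅ i, hA.eigenvalues i

/-- The fixed point iteration map `K(S) = S^{-1/2} (𝓔((S^{1/2} R S^{1/2})^{1/2}))² S^{-1/2}`. -/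
noncomputable def iterMap {G : Type*} [Fintype G] (U : G → Matrix n n ℂ)
    (R S : Matrix n n ℂ) : Matrix n n ℂ :=
  (msqrt S)⁻¹ * (twirl U (msqrt (msqrt S * R * msqrt S))) ^ 2 * (msqrt S)⁻¹

open scoped MatrixOrder

lemma msqrt_eq_sqrt {A : Matrix n n ℂ} (hA : A.PosSemidef) : msqrt A = CFC.sqrt A := by
  rw [msqrt, dif_pos hA, CFC.sqrt_eq_cfc, cfc_nnreal_eq_real _ A, hA.1.cfc_eq]
  simp only [IsHermitian.cfc, Unitary.conjStarAlgAut_apply]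
  congr 3
  funext i
  simp [Real.coe_sqrt, max_eq_left (hA.eigenvalues_nonneg i)]

lemma msqrt_zero : msqrt (0 : Matrix n n ℂ) = 0 := by
  rw [msqrt_eq_sqrt .zero, CFC.sqrt_zero]

lemma Matrix.PosSemidef.real_smul {m : Type*} {A : Matrix m m ℂ} (hA : A.PosSemidef) {k : ℝ}
    (hk : 0 ≤ k) : ((k : ℂ) • A).PosSemidef :=
  hA.smul (Complex.zero_le_real.2 hk)

lemma msqrt_real_smul {A : Matrix n n ℂ} (hA : A.PosSemidef) {k : ℝ} (hk : 0 ≤ k) :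
    msqrt ((k : ℂ) • A) = (√k : ℂ) • msqrt A := by
  rw [msqrt_eq_sqrt (hA.real_smul hk), msqrt_eq_sqrt hA,
    CFC.sqrt_eq_iff _ _ (hA.real_smul hk).nonneg
      ((CFC.sqrt_nonneg A).posSemidef.real_smul (Real.sqrt_nonneg k)).nonneg,
    smul_mul_smul_comm, CFC.sqrt_mul_sqrt_self A hA.nonneg, ← Complex.ofReal_mul,
    Real.mul_self_sqrt hk]

lemma trace_msqrt {A : Matrix n n ℂ} (hA : A.PosSemidef) :
    (msqrt A).trace = ∑ i, (√(hA.1.eigenvalues i) : ℂ) := by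
  rw [msqrt, dif_pos hA, trace_mul_cycle, Unitary.coe_star_mul_self, one_mul, trace_diagonal]
  rfl

lemma sq_re_trace_msqrt_le {A : Matrix n n ℂ} (hA : A.PosSemidef) :
    (msqrt A).trace.re ^ 2 ≤ Fintype.card n * A.trace.re := by
  have hsum : A.trace.re = ∑ i, √(hA.1.eigenvalues i) ^ 2 := by
    simp [hA.1.trace_eq_sum_eigenvalues, Real.sq_sqrt (hA.eigenvalues_nonneg _)]
  rw [trace_msqrt hA, hsum]
  simpa using sq_sum_le_card_mul_sum_sq (s := Finset.univ) (f := fun i => √(hA.1.eigenvalues i))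

lemma Matrix.PosSemidef.le_re_trace_smul_one {A : Matrix n n ℂ} (hA : A.PosSemidef) :
    A ≤ (A.trace.re : ℂ) • 1 := by
  have hle : A ≤ algebraMap ℝ (Matrix n n ℂ) A.trace.re := by
    refine le_algebraMap_of_spectrum_le (fun x hx => ?_) hA.1.isSelfAdjoint
    obtain ⟨i, rfl⟩ := hA.1.spectrum_real_eq_range_eigenvalues ▸ hx
    rw [hA.1.trace_eq_sum_eigenvalues]
    simpa using Finset.single_le_sum (fun j _ => hA.eigenvalues_nonneg j) (Finset.mem_univ i)
  simpa [Algebra.algebraMap_eq_smul_one] using hle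

lemma posSemidef_msqrt_mul_mul_msqrt {R S : Matrix n n ℂ} (hR : R.PosSemidef)
    (hS : S.PosSemidef) : (msqrt R * S * msqrt R).PosSemidef := by
  simpa [msqrt_eq_sqrt hR, (CFC.sqrt_nonneg R).posSemidef.1.eq] using
    hS.conjTranspose_mul_mul_same (msqrt R)

lemma fidelity_nonneg (R S : Matrix n n ℂ) : 0 ≤ fidelity R S := sq_nonneg _

lemma fidelity_zero_right (R : Matrix n n ℂ) : fidelity R 0 = 0 := by
  simp [fidelity, msqrt_zero]

lemma fidelity_real_smul (R : Matrix n n ℂ) {S : Matrix n n ℂ} (hS : S.PosSemidef)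
    {k : ℝ} (hk : 0 ≤ k) : fidelity R ((k : ℂ) • S) = k * fidelity R S := by
  by_cases hR : R.PosSemidef
  · rw [fidelity, mul_smul_comm, smul_mul_assoc,
      msqrt_real_smul (posSemidef_msqrt_mul_mul_msqrt hR hS) hk, trace_smul, smul_eq_mul,
      Complex.re_ofReal_mul, mul_pow, Real.sq_sqrt hk, fidelity]
  · have hmR : msqrt R = 0 := dif_neg hR
    simp [fidelity, hmR, msqrt_zero]

lemma re_trace_le_of_le {m : Type*} [Fintype m] {A B : Matrix m m ℂ} (h : A ≤ B) :
    A.trace.re ≤ B.trace.re := by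
  simpa using Complex.re_le_re (sub_nonneg.mpr h).posSemidef.trace_nonneg

lemma re_trace_msqrt_mul_mul_msqrt_le {R S : Matrix n n ℂ} (hR : R.PosSemidef)
    (hS : S.PosSemidef) : (msqrt R * S * msqrt R).trace.re ≤ R.trace.re * S.trace.re := by
  have hconj := (CFC.sqrt_nonneg R).isSelfAdjoint.conjugate_le_conjugate hS.le_re_trace_smul_one
  rw [← msqrt_eq_sqrt hR, mul_smul_comm, mul_one, smul_mul_assoc, msqrt_eq_sqrt hR,
    CFC.sqrt_mul_sqrt_self R hR.nonneg] at hconj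
  simpa [msqrt_eq_sqrt hR, mul_comm] using re_trace_le_of_le hconj

lemma fidelity_le {R S : Matrix n n ℂ} (hR : R.PosSemidef) (hS : S.PosSemidef) :
    fidelity R S ≤ Fintype.card n * (R.trace.re * S.trace.re) :=
  (sq_re_trace_msqrt_le (posSemidef_msqrt_mul_mul_msqrt hR hS)).trans
    (by gcongr; exact re_trace_msqrt_mul_mul_msqrt_le hR hS)

lemma bures2_zero_right (R : Matrix n n ℂ) : bures2 R 0 = R.trace.re := by
  simp [bures2, fidelity_zero_right]

lemma bures2_real_smul_of_trace_eq_one (R : Matrix n n ℂ) {σ : Matrix n n ℂ}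
    (hσ : σ.PosSemidef) (hσ1 : σ.trace = 1) {k : ℝ} (hk : 0 ≤ k) :
    bures2 R ((k : ℂ) • σ) = R.trace.re + k - 2 * √(k * fidelity R σ) := by
  rw [bures2, fidelity_real_smul R hσ hk, trace_smul, hσ1, smul_eq_mul, mul_one,
    Complex.ofReal_re]

lemma re_trace_sub_fidelity_le_bures2_real_smul (R : Matrix n n ℂ) {σ : Matrix n n ℂ}
    (hσ : σ.PosSemidef) (hσ1 : σ.trace = 1) {k : ℝ} (hk : 0 ≤ k) :
    R.trace.re - fidelity R σ ≤ bures2 R ((k : ℂ) • σ) := by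
  have hf := fidelity_nonneg R σ
  rw [bures2_real_smul_of_trace_eq_one R hσ hσ1 hk, Real.sqrt_mul hk]
  nlinarith [sq_nonneg (√k - √(fidelity R σ)), Real.sq_sqrt hk, Real.sq_sqrt hf]

lemma bures2_fidelity_smul (R : Matrix n n ℂ) {σ : Matrix n n ℂ} (hσ : σ.PosSemidef)
    (hσ1 : σ.trace = 1) :
    bures2 R ((fidelity R σ : ℂ) • σ) = R.trace.re - fidelity R σ := by
  rw [bures2_real_smul_of_trace_eq_one R hσ hσ1 (fidelity_nonneg R σ),
    Real.sqrt_mul_self (fidelity_nonneg R σ)]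
  ring

lemma exists_trace_eq_one_real_smul {m : Type*} [Fintype m] {C : Matrix m m ℂ → Prop}
    (hC : ∀ (k : ℝ) (S : Matrix m m ℂ), 0 ≤ k → C S → C ((k : ℂ) • S))
    {S : Matrix m m ℂ} (hS : S.PosSemidef) (hCS : C S) (hS0 : S ≠ 0) :
    ∃ σ : Matrix m m ℂ, σ.PosSemidef ∧ C σ ∧ σ.trace = 1 ∧ S = (S.trace.re : ℂ) • σ := by
  have htr : (S.trace.re : ℂ) = S.trace :=
    (Complex.eq_re_of_ofReal_le (r := 0) (by simpa using hS.trace_nonneg)).symm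
  have ht0 : S.trace ≠ 0 := fun h => hS0 (hS.trace_eq_zero_iff.mp h)
  have hinv : 0 ≤ S.trace.re⁻¹ := inv_nonneg.mpr (Complex.nonneg_iff.mp hS.trace_nonneg).1
  refine ⟨((S.trace.re⁻¹ : ℝ) : ℂ) • S, hS.real_smul hinv, hC _ S hinv hCS, ?_, ?_⟩
  · rw [trace_smul, Complex.ofReal_inv, htr, smul_eq_mul, inv_mul_cancel₀ ht0]
  · rw [smul_smul, Complex.ofReal_inv, htr, mul_inv_cancel₀ ht0, one_smul]

section Cone

variable {C : Matrix n n ℂ → Prop}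

lemma re_trace_sub_le_bures2 (hC : ∀ (k : ℝ) (S : Matrix n n ℂ), 0 ≤ k → C S → C ((k : ℂ) • S))
    (R : Matrix n n ℂ) {M : ℝ} (hM0 : 0 ≤ M)
    (hM : ∀ σ : Matrix n n ℂ, σ.PosSemidef → C σ → σ.trace = 1 → fidelity R σ ≤ M)
    {S : Matrix n n ℂ} (hS : S.PosSemidef) (hCS : C S) :
    R.trace.re - M ≤ bures2 R S := by
  by_cases hS0 : S = 0
  · rw [hS0, bures2_zero_right]
    linarith
  · obtain ⟨σ, hσ, hCσ, hσ1, hSσ⟩ := exists_trace_eq_one_real_smul hC hS hCS hS0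
    rw [hSσ]
    have hk : 0 ≤ S.trace.re := (Complex.nonneg_iff.mp hS.trace_nonneg).1
    linarith [re_trace_sub_fidelity_le_bures2_real_smul R hσ hσ1 hk, hM σ hσ hCσ hσ1]

theorem sInf_bures2_eq_re_trace_sub_sSup_fidelity (hC0 : C 0)
    (hC : ∀ (k : ℝ) (S : Matrix n n ℂ), 0 ≤ k → C S → C ((k : ℂ) • S))
    {R : Matrix n n ℂ} (hR : R.PosSemidef) :
    sInf {b : ℝ | ∃ S : Matrix n n ℂ, S.PosSemidef ∧ C S ∧ b = bures2 R S} =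
      R.trace.re - sSup {f : ℝ | ∃ σ : Matrix n n ℂ,
          σ.PosSemidef ∧ C σ ∧ σ.trace = 1 ∧ f = fidelity R σ} := by
  set B := {b : ℝ | ∃ S : Matrix n n ℂ, S.PosSemidef ∧ C S ∧ b = bures2 R S}
  set F := {f : ℝ | ∃ σ : Matrix n n ℂ, σ.PosSemidef ∧ C σ ∧ σ.trace = 1 ∧ f = fidelity R σ}
  have hF : BddAbove F := ⟨Fintype.card n * R.trace.re, by
    rintro _ ⟨σ, hσ, -, hσ1, rfl⟩
    simpa [hσ1] using fidelity_le hR hσ⟩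
  have hF0 : 0 ≤ sSup F :=
    Real.sSup_nonneg (by rintro _ ⟨σ, -, -, -, rfl⟩; exact fidelity_nonneg R σ)
  have hlower : ∀ b ∈ B, R.trace.re - sSup F ≤ b := by
    rintro _ ⟨S, hS, hCS, rfl⟩
    exact re_trace_sub_le_bures2 hC R hF0 (fun σ hσ hCσ hσ1 => le_csSup hF ⟨σ, hσ, hCσ, hσ1, rfl⟩)
      hS hCS
  have hB : BddBelow B := ⟨_, hlower⟩
  have hzero : sInf B ≤ R.trace.re :=
    bures2_zero_right R ▸ csInf_le hB ⟨0, .zero, hC0, rfl⟩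
  refine le_antisymm ?_ (le_csInf ⟨_, 0, .zero, hC0, rfl⟩ hlower)
  -- `Real.sSup_le` also covers the case without states, where `sSup ∅ = 0`.
  suffices sSup F ≤ R.trace.re - sInf B by linarith
  refine Real.sSup_le ?_ (by linarith)
  rintro _ ⟨σ, hσ, hCσ, hσ1, rfl⟩
  have hopt := csInf_le hB ⟨_, hσ.real_smul (fidelity_nonneg R σ),
    hC _ σ (fidelity_nonneg R σ) hCσ, (bures2_fidelity_smul R hσ hσ1).symm⟩
  linarith

end Cone

lemma twirl_smul {G : Type*} [Fintype G] (U : G → Matrix n n ℂ) (c : ℂ) (X : Matrix n n ℂ) :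
    twirl U (c • X) = c • twirl U X := by
  simp [twirl, Finset.smul_sum, smul_comm c]

theorem bures_min_eq_trace_sub_fidelity_max_general {G : Type*} [Fintype G]
    (U : G → Matrix n n ℂ)
    (R : Matrix n n ℂ) (hR : R.PosSemidef) :
    sInf {b : ℝ | ∃ S : Matrix n n ℂ, S.PosSemidef ∧ twirl U S = S ∧ b = bures2 R S} =
      (R.trace).re -
        sSup {f : ℝ | ∃ σ : Matrix n n ℂ,
          σ.PosSemidef ∧ twirl U σ = σ ∧ σ.trace = 1 ∧ f = fidelity R σ} ∧
    ∀ τ : Matrix n n ℂ, τ.PosSemidef → twirl U τ = τ → τ.trace = 1 →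
      (∀ σ : Matrix n n ℂ, σ.PosSemidef → twirl U σ = σ → σ.trace = 1 →
        fidelity R σ ≤ fidelity R τ) →
      ∀ S : Matrix n n ℂ, S.PosSemidef → twirl U S = S →
        bures2 R (((fidelity R τ : ℝ) : ℂ) • τ) ≤ bures2 R S := by
  have hC : ∀ (k : ℝ) (S : Matrix n n ℂ), 0 ≤ k → twirl U S = S →
      twirl U ((k : ℂ) • S) = (k : ℂ) • S :=
    fun k S _ hS => by rw [twirl_smul, hS]
  refine ⟨sInf_bures2_eq_re_trace_sub_sSup_fidelity (by simp [twirl]) hC hR, ?_⟩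
  intro τ hτ _ hτ1 hmax S hS hCS
  rw [bures2_fidelity_smul R hτ hτ1]
  exact re_trace_sub_le_bures2 hC R (fidelity_nonneg R τ) hmax hS hCS

/-- the Bures minimum over invariant PSD matrices equals
`Tr R − max F(R,σ)` over invariant states `σ`, and if `τ` attains the fidelity maximum then
`T = F(R,τ) τ` attains the Bures minimum. -/
theorem bures_min_eq_trace_sub_fidelity_max {G : Type*} [Fintype G]
    (U : G → Matrix n n ℂ) (hU : ∀ g, U g ∈ Matrix.unitaryGroup n ℂ)
    (R : Matrix n n ℂ) (hR : R.PosSemidef) :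
    sInf {b : ℝ | ∃ S : Matrix n n ℂ, S.PosSemidef ∧ twirl U S = S ∧ b = bures2 R S} =
      (R.trace).re -
        sSup {f : ℝ | ∃ σ : Matrix n n ℂ,
          σ.PosSemidef ∧ twirl U σ = σ ∧ σ.trace = 1 ∧ f = fidelity R σ} ∧
    ∀ τ : Matrix n n ℂ, τ.PosSemidef → twirl U τ = τ → τ.trace = 1 →
      (∀ σ : Matrix n n ℂ, σ.PosSemidef → twirl U σ = σ → σ.trace = 1 →
        fidelity R σ ≤ fidelity R τ) →
      ∀ S : Matrix n n ℂ, S.PosSemidef → twirl U S = S →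
        bures2 R (((fidelity R τ : ℝ) : ℂ) • τ) ≤ bures2 R S :=
  bures_min_eq_trace_sub_fidelity_max_general U R hR
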